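/- Pushing a block B consisting of p maxima and q minima down past a block A consisting of M maxima and m minima changes the width of the critical sequence by exactly 4(q·M − p·m). That is, if a critical sequence has the form u ++ A ++ B ++ v and is rearranged to u ++ B ++ A ++ v (with A and B any lists of +1/−1 entries, B containing p entries equal to −1 and q entries equal to +1, A containing M entries equal to −1 and m entries equal to +1), then W(u ++ B ++ A ++ v) − W(u ++ A ++ B ++ v) = 4(q·M − p·m). -/

import Mathlib

/-!
Extend the width to the sum `levelSum c e` of strand counts over the levels `0, …, |e| - 1`;
it differs from the width only by the bottom level `c`. A block placed after another block `X`
sees every one of its levels raised by `2 · ΣX`, so exchanging adjacent blocks `X` and `Y`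
changes `levelSum` by `2 (|Y| ΣX - |X| ΣY)`, while everything below and above the pair is
untouched. For blocks of `±1` entries, `ΣB = q - p`, `|A| = m + M`, `ΣA = m - M`, `|B| = p + q`,
and the difference simplifies to `4 (q M - p m)`.
-/

/-- The width of a critical sequence `e` (entries `+1` = minimum, `-1` = maximum)
with initial strand count `c`. -/
def seqWidth (c : ℤ) (e : List ℤ) : ℤ :=
  ∑ k ∈ Finset.Ico 1 e.length, (c + 2 * ((e.take k).sum))

def levelSum (c : ℤ) (e : List ℤ) : ℤ :=
  ∑ k ∈ Finset.range e.length, (c + 2 * (e.take k).sum)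

lemma seqWidth_eq_levelSum_sub {e : List ℤ} (he : e ≠ []) (c : ℤ) :
    seqWidth c e = levelSum c e - c := by
  rw [seqWidth, levelSum, Finset.range_eq_Ico,
    Finset.sum_eq_sum_Ico_succ_bot (List.length_pos_iff.mpr he)]
  simp

lemma seqWidth_sub_seqWidth {e f : List ℤ} (hlen : e.length = f.length) (c : ℤ) :
    seqWidth c e - seqWidth c f = levelSum c e - levelSum c f := by
  by_cases he : e = []
  · subst he
    rw [List.eq_nil_of_length_eq_zero hlen.symm, sub_self, sub_self]
  · have hf : f ≠ [] := by
      rw [← List.length_pos_iff, ← hlen]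
      exact List.length_pos_iff.mpr he
    rw [seqWidth_eq_levelSum_sub he, seqWidth_eq_levelSum_sub hf]
    ring

lemma levelSum_append (c : ℤ) (e f : List ℤ) :
    levelSum c (e ++ f) = levelSum c e + levelSum (c + 2 * e.sum) f := by
  rw [levelSum, List.length_append, Finset.sum_range_add]
  congr 1
  · refine Finset.sum_congr rfl fun k hk => ?_
    rw [List.take_append_of_le_length (Finset.mem_range.mp hk).le]
  · refine Finset.sum_congr rfl fun k _ => ?_
    rw [List.take_append, List.sum_append, List.take_of_length_le (by omega),
      Nat.add_sub_cancel_left]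
    ring

lemma levelSum_add (c d : ℤ) (e : List ℤ) :
    levelSum (c + d) e = levelSum c e + e.length * d := by
  simp only [levelSum, add_right_comm c d, Finset.sum_add_distrib, Finset.sum_const,
    Finset.card_range, nsmul_eq_mul]

lemma levelSum_append_sub_levelSum_append (c : ℤ) (X Y : List ℤ) :
    levelSum c (X ++ Y) - levelSum c (Y ++ X) = 2 * (Y.length * X.sum - X.length * Y.sum) := by
  rw [levelSum_append, levelSum_append, levelSum_add, levelSum_add]
  ring

lemma levelSum_swap_blocks (c : ℤ) (u X Y v : List ℤ) :
    levelSum c (u ++ X ++ Y ++ v) - levelSum c (u ++ Y ++ X ++ v)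
      = 2 * (Y.length * X.sum - X.length * Y.sum) := by
  simp only [List.append_assoc u]
  rw [levelSum_append, levelSum_append c u, levelSum_append, levelSum_append _ (Y ++ X),
    List.sum_append, List.sum_append, add_comm X.sum,
    ← levelSum_append_sub_levelSum_append (c + 2 * u.sum)]
  ring

lemma sum_eq_count_one_sub_count_neg_one {e : List ℤ} (he : ∀ x ∈ e, x = 1 ∨ x = -1) :
    e.sum = e.count 1 - e.count (-1) := by
  induction e with
  | nil => simp
  | cons a t ih =>
    have ht := ih fun x hx => he x (List.mem_cons_of_mem a hx)
    rcases he a List.mem_cons_self with rfl | rfl <;> simp [ht] <;> ring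

lemma length_eq_count_one_add_count_neg_one {e : List ℤ} (he : ∀ x ∈ e, x = 1 ∨ x = -1) :
    (e.length : ℤ) = e.count 1 + e.count (-1) := by
  induction e with
  | nil => simp
  | cons a t ih =>
    have ht := ih fun x hx => he x (List.mem_cons_of_mem a hx)
    rcases he a List.mem_cons_self with rfl | rfl <;> simp [ht] <;> ring

theorem push_block_past_block_general (c : ℤ) (u v A B : List ℤ)
    (hA : ∀ x ∈ A, x = 1 ∨ x = -1) (hB : ∀ x ∈ B, x = 1 ∨ x = -1)
    (p q M m : ℕ)
    (hp : B.count (-1) = p) (hq : B.count 1 = q)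
    (hM : A.count (-1) = M) (hm : A.count 1 = m) :
    seqWidth c (u ++ B ++ A ++ v) - seqWidth c (u ++ A ++ B ++ v)
      = 4 * ((q : ℤ) * M - (p : ℤ) * m) := by
  rw [seqWidth_sub_seqWidth (by simp only [List.length_append]; omega), levelSum_swap_blocks,
    sum_eq_count_one_sub_count_neg_one hA, sum_eq_count_one_sub_count_neg_one hB,
    length_eq_count_one_add_count_neg_one hA, length_eq_count_one_add_count_neg_one hB,
    hp, hq, hM, hm]
  ring

/-- Pushing a block `B` with `p` maxima and `q` minima down past a block `A` with
`M` maxima and `m` minima changes the width by exactly `4(q·M − p·m)`. -/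
theorem push_block_past_block (c : ℤ) (u v A B : List ℤ)
    (hu : ∀ x ∈ u, x = 1 ∨ x = -1) (hv : ∀ x ∈ v, x = 1 ∨ x = -1)
    (hA : ∀ x ∈ A, x = 1 ∨ x = -1) (hB : ∀ x ∈ B, x = 1 ∨ x = -1)
    (p q M m : ℕ)
    (hp : B.count (-1) = p) (hq : B.count 1 = q)
    (hM : A.count (-1) = M) (hm : A.count 1 = m) :
    seqWidth c (u ++ B ++ A ++ v) - seqWidth c (u ++ A ++ B ++ v)
      = 4 * ((q : ℤ) * M - (p : ℤ) * m) :=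
  push_block_past_block_general c u v A B hA hB p q M m hp hq hM hm
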